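/- arXiv:1708.00058 — 4 statements merged into one kernel-verified Lean document; each statement's English description precedes it below -/
import Mathlib

section
/- Let N ≥ 1 be an integer, let J = (J_{i,j})_{1≤i<j≤N} be non-negative real numbers, and let σ be sampled from the Ising model with coupling constants J. Then for every subset A ⊆ {1,…,N}, the expectation E(∏_{x∈A} σ_x) is non-negative. -/
open scoped BigOperators

/-- The spin value (an element of `{-1, 1} ⊆ ℝ`) encoded by a Boolean. -/
noncomputable def isingSpin (b : Bool) : ℝ := if b then 1 else -1

/-- The Boltzmann weight of an Ising configuration `s : Fin N → Bool` (with spins `±1`)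
for the Ising model with coupling constants `J = (J i j)_{i < j}`. -/
noncomputable def isingCouplingWeight (N : ℕ) (J : Fin N → Fin N → ℝ) (s : Fin N → Bool) : ℝ :=
  Real.exp (∑ p ∈ Finset.univ.filter (fun p : Fin N × Fin N => p.1 < p.2),
    J p.1 p.2 * (isingSpin (s p.1) * isingSpin (s p.2)))

lemma sum_pow_spin (m : ℕ) : 0 ≤ ∑ b : Bool, isingSpin b ^ m := by
  simp [isingSpin, Fintype.sum_bool]
  rcases Nat.even_or_odd m with h | h
  · simp [h.neg_one_pow]
  · simp [h.neg_one_pow]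

lemma prod_spin_eq_pow (N : ℕ) (A : Finset (Fin N)) (E : Finset (Fin N × Fin N))
    (s : Fin N → Bool) :
    (∏ x ∈ A, isingSpin (s x)) * ∏ p ∈ E, (isingSpin (s p.1) * isingSpin (s p.2))
      = ∏ x : Fin N, isingSpin (s x) ^
          ((if x ∈ A then 1 else 0) + (E.filter (fun p => p.1 = x)).card
            + (E.filter (fun p => p.2 = x)).card) := by
  simp_rw [pow_add, Finset.prod_mul_distrib]
  have h1 : (∏ x ∈ A, isingSpin (s x))
      = ∏ x : Fin N, isingSpin (s x) ^ (if x ∈ A then 1 else 0) := by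
    simp_rw [pow_ite, pow_one, pow_zero]
    rw [Finset.prod_ite_mem, Finset.univ_inter]
  have h2 : (∏ p ∈ E, isingSpin (s p.1))
      = ∏ x : Fin N, isingSpin (s x) ^ (E.filter (fun p => p.1 = x)).card := by
    rw [← Finset.prod_fiberwise_of_maps_to (g := fun p : Fin N × Fin N => p.1)
      (fun p _ => Finset.mem_univ p.1)]
    refine Finset.prod_congr rfl (fun x _ => ?_)
    rw [Finset.prod_congr rfl (fun p hp => ?_), Finset.prod_const]
    rw [(Finset.mem_filter.mp hp).2]
  have h3 : (∏ p ∈ E, isingSpin (s p.2))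
      = ∏ x : Fin N, isingSpin (s x) ^ (E.filter (fun p => p.2 = x)).card := by
    rw [← Finset.prod_fiberwise_of_maps_to (g := fun p : Fin N × Fin N => p.2)
      (fun p _ => Finset.mem_univ p.2)]
    refine Finset.prod_congr rfl (fun x _ => ?_)
    rw [Finset.prod_congr rfl (fun p hp => ?_), Finset.prod_const]
    rw [(Finset.mem_filter.mp hp).2]
  rw [h1, h2, h3, mul_assoc]

lemma sum_spins_nonneg (N : ℕ) (A : Finset (Fin N)) (E : Finset (Fin N × Fin N)) :
    0 ≤ ∑ s : Fin N → Bool, (∏ x ∈ A, isingSpin (s x)) *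
      ∏ p ∈ E, (isingSpin (s p.1) * isingSpin (s p.2)) := by
  simp_rw [prod_spin_eq_pow]
  rw [← Fintype.piFinset_univ,
    ← Finset.prod_univ_sum (fun _ : Fin N => (Finset.univ : Finset Bool))
      (fun x b => isingSpin b ^ ((if x ∈ A then 1 else 0)
        + (E.filter (fun p => p.1 = x)).card + (E.filter (fun p => p.2 = x)).card))]
  exact Finset.prod_nonneg (fun x _ => sum_pow_spin _)

/-- **Griffiths' first inequality.**  If `σ` is sampled from the Ising model with non-negative
coupling constants `J = (J_{i,j})_{1 ≤ i < j ≤ N}`, then `E(∏_{x ∈ A} σ_x) ≥ 0` for every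
`A ⊆ {1, …, N}`.  The expectation is written as the ratio of the correlation sum and the
partition function. -/
theorem griffiths_first_inequality
    (N : ℕ) (hN : 1 ≤ N)
    (J : Fin N → Fin N → ℝ)
    (hJ : ∀ i j : Fin N, i < j → 0 ≤ J i j)
    (A : Finset (Fin N)) :
    0 ≤ (∑ s : Fin N → Bool, (∏ x ∈ A, isingSpin (s x)) * isingCouplingWeight N J s) /
        (∑ s : Fin N → Bool, isingCouplingWeight N J s) := by
  have hden : 0 < ∑ s : Fin N → Bool, isingCouplingWeight N J s :=
    Finset.sum_pos (fun s _ => Real.exp_pos _) Finset.univ_nonempty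
  refine div_nonneg ?_ hden.le
  set P := Finset.univ.filter (fun p : Fin N × Fin N => p.1 < p.2) with hP
  have hw : ∀ s : Fin N → Bool, isingCouplingWeight N J s =
      ∏ p ∈ P, (isingSpin (s p.1) * isingSpin (s p.2) * Real.sinh (J p.1 p.2)
        + Real.cosh (J p.1 p.2)) := by
    intro s
    rw [isingCouplingWeight, Real.exp_sum]
    refine Finset.prod_congr rfl (fun p _ => ?_)
    have h1 := Real.cosh_add_sinh (J p.1 p.2)
    have h2 := Real.cosh_sub_sinh (J p.1 p.2)
    cases s p.1 <;> cases s p.2 <;> simp [isingSpin] <;> linarith [h1, h2]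
  simp_rw [hw, Finset.prod_add, Finset.mul_sum]
  rw [Finset.sum_comm]
  refine Finset.sum_nonneg (fun E hE => ?_)
  have hEP : E ⊆ P := Finset.mem_powerset.mp hE
  have key : ∀ s : Fin N → Bool,
      (∏ x ∈ A, isingSpin (s x)) *
        ((∏ p ∈ E, (isingSpin (s p.1) * isingSpin (s p.2) * Real.sinh (J p.1 p.2))) *
          ∏ p ∈ P \ E, Real.cosh (J p.1 p.2))
      = ((∏ p ∈ E, Real.sinh (J p.1 p.2)) * ∏ p ∈ P \ E, Real.cosh (J p.1 p.2)) *
        ((∏ x ∈ A, isingSpin (s x)) * ∏ p ∈ E, (isingSpin (s p.1) * isingSpin (s p.2))) := by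
    intro s
    rw [Finset.prod_mul_distrib]
    ring
  simp_rw [key, ← Finset.mul_sum]
  refine mul_nonneg (mul_nonneg ?_ ?_) (sum_spins_nonneg N A E)
  · refine Finset.prod_nonneg (fun p hp => Real.sinh_nonneg_iff.mpr ?_)
    have := hEP hp
    rw [hP, Finset.mem_filter] at this
    exact hJ p.1 p.2 this.2
  · exact Finset.prod_nonneg (fun p _ => (Real.cosh_pos _).le)
end

section
/- Let n ≥ 2 be an integer, let G be a finite graph, and let U : [−1,1] → ℝ ∪ {∞} be non-increasing (U(r₁) ≥ U(r₂) whenever r₁ ≤ r₂) with U(1) < ∞ and U(r₀) < ∞ for some r₀ < 1. If σ is sampled from the spin O(n) model on G with potential U, then E(⟨σ_x, σ_y⟩) ≥ 0 for all vertices x, y ∈ V(G). -/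
open MeasureTheory
open scoped BigOperators

/-- The uniform probability measure on the unit sphere `S^{n-1} ⊆ ℝ^n`
(the normalized surface measure). -/
noncomputable def sphereUniform (n : ℕ) :
    Measure (Metric.sphere (0 : EuclideanSpace ℝ (Fin n)) 1) :=
  ((volume : Measure (EuclideanSpace ℝ (Fin n))).toSphere Set.univ)⁻¹ •
    (volume : Measure (EuclideanSpace ℝ (Fin n))).toSphere

/-- The standard inner product of two points of the unit sphere of `ℝ^n`. -/
noncomputable def sdot {n : ℕ} (a b : Metric.sphere (0 : EuclideanSpace ℝ (Fin n)) 1) : ℝ :=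
  inner ℝ (a : EuclideanSpace ℝ (Fin n)) (b : EuclideanSpace ℝ (Fin n))

theorem sdot_comm {n : ℕ} (a b : Metric.sphere (0 : EuclideanSpace ℝ (Fin n)) 1) :
    sdot a b = sdot b a := real_inner_comm _ _

/-- `exp(-u)` for `u ∈ ℝ ∪ {∞}`, with the convention `exp(-∞) = 0`. -/
noncomputable def expNeg (u : WithTop ℝ) : ℝ :=
  if h : u = ⊤ then 0 else Real.exp (-(u.untop h))

/-- The Boltzmann weight `exp[-∑_{{u,v} ∈ E(G)} U(⟨σ_u, σ_v⟩)]` of a configuration `σ` for the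
spin O(n) model with potential `U` on a finite graph `G`. -/
noncomputable def potentialWeight (n : ℕ) {V : Type} [Fintype V] [DecidableEq V]
    (G : SimpleGraph V) [DecidableRel G.Adj] (U : ℝ → WithTop ℝ)
    (σ : V → Metric.sphere (0 : EuclideanSpace ℝ (Fin n)) 1) : ℝ :=
  ∏ e ∈ G.edgeFinset,
    Sym2.lift ⟨fun u v => expNeg (U (sdot (σ u) (σ v))),
      fun u v => by simp only [sdot_comm (σ u) (σ v)]⟩ e


/-!
Fix a coordinate `i`. Reversing the sign of the `i`-th coordinate of any set of spins preserves
the product measure, so `E[σ_x^i σ_y^i W]` may be averaged over the `2^|V|` such sign flips. After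
normalizing the signs so that every `σ_v^i ≥ 0`, the flips act as Ising spins `ε ∈ {±1}^V`: the
weight of an edge `uv` becomes `f(ε_u ε_v)` with
`f(t) = exp(-U(t σ_u^i σ_v^i + ∑_{j ≠ i} σ_u^j σ_v^j))` nondecreasing in `t`, since `U` is
non-increasing. Writing `f(t) = A + B t` with `A, B ≥ 0` and
expanding, `∑_ε ε_x ε_y ∏ f(ε_u ε_v)` is a nonnegative combination of sums `∑_ε ∏_v ε_v^{k_v} ≥ 0`
(Griffiths' first inequality). Summing over `i` gives the claim.
-/

section SphereMap

variable {E : Type*} [NormedAddCommGroup E] [NormedSpace ℝ E]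

noncomputable def sphereMap (L : E ≃ₗᵢ[ℝ] E) (a : Metric.sphere (0 : E) 1) :
    Metric.sphere (0 : E) 1 :=
  ⟨L a, by simp⟩

theorem continuous_sphereMap (L : E ≃ₗᵢ[ℝ] E) : Continuous (sphereMap L) :=
  (L.continuous.comp continuous_subtype_val).subtype_mk _

theorem image_val_preimage_sphereMap (L : E ≃ₗᵢ[ℝ] E) (s : Set (Metric.sphere (0 : E) 1)) :
    Subtype.val '' (sphereMap L ⁻¹' s) = L.symm '' (Subtype.val '' s) := by
  ext z
  constructor
  · rintro ⟨a, ha, rfl⟩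
    exact ⟨_, ⟨_, ha, rfl⟩, L.symm_apply_apply a⟩
  · rintro ⟨_, ⟨b, hb, rfl⟩, rfl⟩
    refine ⟨⟨L.symm b, by simp⟩, ?_, rfl⟩
    simpa [sphereMap] using hb

variable [MeasurableSpace E] [BorelSpace E]

theorem measurePreserving_sphereMap {μ : Measure E} {L : E ≃ₗᵢ[ℝ] E}
    (hL : MeasurePreserving L μ μ) :
    MeasurePreserving (sphereMap L) μ.toSphere μ.toSphere := by
  have hmeas := (continuous_sphereMap L).measurable
  refine ⟨hmeas, Measure.ext fun s hs => ?_⟩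
  rw [Measure.map_apply hmeas hs, Measure.toSphere_apply' _ (hmeas hs),
    Measure.toSphere_apply' _ hs, image_val_preimage_sphereMap, ← Set.image2_smul,
    ← Set.image2_smul, ← Set.image_image2_distrib_right (fun r z => L.symm.map_smul r z),
    L.symm.image_eq_preimage_symm, L.symm_symm,
    hL.measure_preimage_emb L.toHomeomorph.measurableEmbedding]

end SphereMap

instance (n : ℕ) : IsFiniteMeasure (sphereUniform n) :=
  ⟨by
    rw [sphereUniform, Measure.smul_apply, smul_eq_mul]
    exact (ENNReal.inv_mul_le_one _).trans_lt ENNReal.one_lt_top⟩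

theorem measurePreserving_sphereUniform {n : ℕ}
    (L : EuclideanSpace ℝ (Fin n) ≃ₗᵢ[ℝ] EuclideanSpace ℝ (Fin n)) :
    MeasurePreserving (sphereMap L) (sphereUniform n) (sphereUniform n) :=
  (measurePreserving_sphereMap L.measurePreserving).smul_measure _

def boolSign (b : Bool) : ℝ := if b then -1 else 1

@[simp] theorem boolSign_false : boolSign false = 1 := rfl

@[simp] theorem boolSign_true : boolSign true = -1 := rfl

theorem boolSign_xor (b c : Bool) : boolSign (xor b c) = boolSign b * boolSign c := by
  cases b <;> cases c <;> simp

theorem boolSign_decide_neg_mul_self (t : ℝ) : boolSign (decide (t < 0)) * t = |t| := by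
  by_cases h : t < 0
  · simp [h, abs_of_neg h]
  · simp [h, abs_of_nonneg (not_lt.mp h)]

abbrev Spin (n : ℕ) := Metric.sphere (0 : EuclideanSpace ℝ (Fin n)) 1

section Flip

variable {n : ℕ}

theorem sdot_eq_sum (a b : Spin n) : sdot a b = ∑ j, a.1 j * b.1 j := by
  simp [sdot, PiLp.inner_apply, mul_comm]

theorem abs_sdot_le_one (a b : Spin n) : |sdot a b| ≤ 1 := by
  simpa [sdot] using abs_real_inner_le_norm (a : EuclideanSpace ℝ (Fin n)) b

theorem abs_apply_le_one (a : Spin n) (j : Fin n) : |a.1 j| ≤ 1 := by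
  simpa using PiLp.norm_apply_le (a : EuclideanSpace ℝ (Fin n)) j

noncomputable def reflectCoord (i : Fin n) (b : Bool) :
    EuclideanSpace ℝ (Fin n) ≃ₗᵢ[ℝ] EuclideanSpace ℝ (Fin n) :=
  LinearIsometryEquiv.piLpCongrRight 2 fun j =>
    if j = i ∧ b then LinearIsometryEquiv.neg ℝ else LinearIsometryEquiv.refl ℝ ℝ

noncomputable def flipSpin (i : Fin n) (b : Bool) : Spin n → Spin n := sphereMap (reflectCoord i b)

theorem flipSpin_apply (i : Fin n) (b : Bool) (a : Spin n) (j : Fin n) :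
    (flipSpin i b a).1 j = if j = i then boolSign b * a.1 j else a.1 j := by
  by_cases hj : j = i <;> cases b <;>
    simp [flipSpin, sphereMap, reflectCoord, LinearIsometryEquiv.piLpCongrRight_apply, hj]

theorem flipSpin_apply_self (i : Fin n) (b : Bool) (a : Spin n) :
    (flipSpin i b a).1 i = boolSign b * a.1 i := by
  simp [flipSpin_apply]

theorem flipSpin_flipSpin (i : Fin n) (b c : Bool) (a : Spin n) :
    flipSpin i b (flipSpin i c a) = flipSpin i (xor b c) a := by
  ext j
  simp only [flipSpin_apply, boolSign_xor]
  split_ifs <;> ring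

theorem sdot_flipSpin (i : Fin n) (b c : Bool) (a a' : Spin n) :
    sdot (flipSpin i b a) (flipSpin i c a') =
      boolSign b * boolSign c * (a.1 i * a'.1 i) + (sdot a a' - a.1 i * a'.1 i) := by
  simp only [sdot_eq_sum, flipSpin_apply, ← Finset.sum_erase_add _ _ (Finset.mem_univ i)]
  rw [Finset.sum_congr rfl fun j hj => by rw [if_neg (Finset.ne_of_mem_erase hj),
    if_neg (Finset.ne_of_mem_erase hj)]]
  simp only [if_true]
  ring

theorem measurePreserving_flipSpin (i : Fin n) (b : Bool) :
    MeasurePreserving (flipSpin i b) (sphereUniform n) (sphereUniform n) :=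
  measurePreserving_sphereUniform _

end Flip

section Ising

variable {V : Type}

def edgeSign (ε : V → Bool) : Sym2 V → ℝ :=
  Sym2.lift ⟨fun u v => boolSign (ε u) * boolSign (ε v), fun _ _ => mul_comm _ _⟩

theorem apply_edgeSign (f : ℝ → ℝ) (ε : V → Bool) (e : Sym2 V) :
    f (edgeSign ε e) = (f 1 + f (-1)) / 2 + (f 1 - f (-1)) / 2 * edgeSign ε e := by
  induction e using Sym2.ind with
  | _ u v => cases hu : ε u <;> cases hv : ε v <;> simp [edgeSign, hu, hv] <;> ring

variable [Fintype V]

def spinMonomial (k : V → ℕ) (ε : V → Bool) : ℝ := ∏ v, boolSign (ε v) ^ k v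

variable [DecidableEq V]

theorem sum_spinMonomial_nonneg (k : V → ℕ) : 0 ≤ ∑ ε : V → Bool, spinMonomial k ε := by
  -- The sum factorizes over `v`, and each factor `1 + (-1) ^ k v` is `2` or `0`.
  unfold spinMonomial
  rw [← Fintype.prod_sum fun v b => boolSign b ^ k v]
  refine Finset.prod_nonneg fun v _ => ?_
  rcases Nat.even_or_odd (k v) with h | h <;> simp [h.neg_one_pow]

theorem spinMonomial_mul_boolSign (k : V → ℕ) (ε : V → Bool) (u : V) :
    spinMonomial k ε * boolSign (ε u) = spinMonomial (k + Pi.single u 1) ε := by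
  simp only [spinMonomial, Pi.add_apply, pow_add, Finset.prod_mul_distrib]
  congr 1
  rw [Fintype.prod_eq_single u fun v hv => by simp [hv]]
  simp

theorem sum_spinMonomial_mul_prod_nonneg (F : Finset (Sym2 V)) (w : (V → Bool) → Sym2 V → ℝ)
    (hw : ∀ e ∈ F, ∃ f : ℝ → ℝ, 0 ≤ f (-1) ∧ f (-1) ≤ f 1 ∧ ∀ ε, w ε e = f (edgeSign ε e))
    (k : V → ℕ) : 0 ≤ ∑ ε : V → Bool, spinMonomial k ε * ∏ e ∈ F, w ε e := by
  induction F using Finset.cons_induction generalizing k with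
  | empty => simpa using sum_spinMonomial_nonneg k
  | cons e F he ih =>
    have ih := ih fun e' he' => hw e' (Finset.mem_cons_of_mem he')
    obtain ⟨f, hf0, hf1, hwf⟩ := hw e (Finset.mem_cons_self e F)
    induction e using Sym2.ind with
    | _ u v =>
      have hsplit : ∀ ε, spinMonomial k ε * ∏ e' ∈ Finset.cons s(u, v) F he, w ε e' =
          (f 1 + f (-1)) / 2 * (spinMonomial k ε * ∏ e' ∈ F, w ε e') +
          (f 1 - f (-1)) / 2 *
            (spinMonomial (k + Pi.single u 1 + Pi.single v 1) ε * ∏ e' ∈ F, w ε e') := by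
        intro ε
        rw [Finset.prod_cons, hwf, apply_edgeSign f, ← spinMonomial_mul_boolSign,
          ← spinMonomial_mul_boolSign]
        simp only [edgeSign, Sym2.lift_mk]
        ring
      simp only [hsplit, Finset.sum_add_distrib, ← Finset.mul_sum]
      exact add_nonneg (mul_nonneg (by linarith) (ih k))
        (mul_nonneg (by linarith) (ih (k + Pi.single u 1 + Pi.single v 1)))

theorem sum_boolSign_mul_boolSign_mul_prod_nonneg (F : Finset (Sym2 V))
    (w : (V → Bool) → Sym2 V → ℝ)
    (hw : ∀ e ∈ F, ∃ f : ℝ → ℝ, 0 ≤ f (-1) ∧ f (-1) ≤ f 1 ∧ ∀ ε, w ε e = f (edgeSign ε e))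
    (x y : V) : 0 ≤ ∑ ε : V → Bool, boolSign (ε x) * boolSign (ε y) * ∏ e ∈ F, w ε e := by
  have hxy : ∀ ε,
      boolSign (ε x) * boolSign (ε y) = spinMonomial (Pi.single x 1 + Pi.single y 1) ε := by
    intro ε
    rw [← spinMonomial_mul_boolSign, ← zero_add (Pi.single x 1), ← spinMonomial_mul_boolSign]
    simp [spinMonomial]
  simpa only [hxy] using sum_spinMonomial_mul_prod_nonneg F w hw _

end Ising

theorem integral_nonneg_of_sum_comp_nonneg {α ι : Type*} [MeasurableSpace α] [Fintype ι]
    [Nonempty ι] {μ : Measure α} {g : α → ℝ} {φ : ι → α → α}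
    (hφ : ∀ k, MeasurePreserving (φ k) μ μ) (hsum : ∀ a, 0 ≤ ∑ k, g (φ k a)) :
    0 ≤ ∫ a, g a ∂μ := by
  by_cases hg : Integrable g μ
  swap
  · rw [integral_undef hg]
  have hcomp : ∀ k, ∫ a, g (φ k a) ∂μ = ∫ a, g a ∂μ := fun k => by
    rw [← integral_map (hφ k).aemeasurable (by rw [(hφ k).map_eq]; exact hg.1), (hφ k).map_eq]
  have hint : ∀ k, Integrable (fun a => g (φ k a)) μ := fun k =>
    (hφ k).integrable_comp_of_integrable hg
  have hcard : Fintype.card ι • ∫ a, g a ∂μ = ∫ a, ∑ k, g (φ k a) ∂μ := by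
    rw [integral_finsetSum _ fun k _ => hint k,
      Finset.sum_congr rfl fun k _ => hcomp k, Finset.sum_const, Finset.card_univ]
  exact (nsmul_nonneg_iff Fintype.card_ne_zero).mp (hcard ▸ integral_nonneg hsum)

section Weight

variable {n : ℕ} {V : Type} {U : ℝ → WithTop ℝ}

theorem expNeg_nonneg (u : WithTop ℝ) : 0 ≤ expNeg u := by
  unfold expNeg
  split
  · rfl
  · exact (Real.exp_pos _).le

theorem expNeg_antitone : Antitone expNeg := by
  intro u v h
  unfold expNeg
  split_ifs with hv hu hu
  · rfl
  · exact (Real.exp_pos _).le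
  · exact absurd (top_le_iff.mp (hu ▸ h)) hv
  · exact Real.exp_le_exp.mpr (neg_le_neg ((WithTop.untop_le_iff _).mpr (by simpa using h)))

noncomputable def edgeWeight (U : ℝ → WithTop ℝ) (σ : V → Spin n) : Sym2 V → ℝ :=
  Sym2.lift ⟨fun u v => expNeg (U (sdot (σ u) (σ v))),
    fun u v => by simp only [sdot_comm (σ u) (σ v)]⟩

theorem edgeWeight_nonneg (σ : V → Spin n) (e : Sym2 V) : 0 ≤ edgeWeight U σ e := by
  induction e using Sym2.ind with
  | _ u v => exact expNeg_nonneg _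

variable [Fintype V] [DecidableEq V] (G : SimpleGraph V) [DecidableRel G.Adj]

theorem potentialWeight_eq_prod_edgeWeight (σ : V → Spin n) :
    potentialWeight n G U σ = ∏ e ∈ G.edgeFinset, edgeWeight U σ e := rfl

theorem potentialWeight_nonneg (σ : V → Spin n) : 0 ≤ potentialWeight n G U σ :=
  Finset.prod_nonneg fun e _ => edgeWeight_nonneg σ e

theorem potentialWeight_le (hU : AntitoneOn U (Set.Icc (-1) 1)) (σ : V → Spin n) :
    potentialWeight n G U σ ≤ expNeg (U 1) ^ G.edgeFinset.card := by
  rw [potentialWeight_eq_prod_edgeWeight, ← Finset.prod_const]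
  refine Finset.prod_le_prod (fun e _ => edgeWeight_nonneg σ e) fun e _ => ?_
  induction e using Sym2.ind with
  | _ u v =>
    have h := abs_le.mp (abs_sdot_le_one (σ u) (σ v))
    exact expNeg_antitone (hU ⟨h.1, h.2⟩ ⟨by norm_num, le_rfl⟩ h.2)

theorem measurable_potentialWeight (hU : Measurable fun r => expNeg (U r)) :
    Measurable (potentialWeight n G U) := by
  refine Finset.measurable_prod _ fun e _ => ?_
  induction e using Sym2.ind with
  | _ u v =>
    refine hU.comp ?_
    exact (continuous_inner.comp ((continuous_subtype_val.comp (continuous_apply u)).prodMk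
      (continuous_subtype_val.comp (continuous_apply v)))).measurable

theorem integrable_potentialWeight (hU : AntitoneOn U (Set.Icc (-1) 1))
    (hUmeas : Measurable fun r => expNeg (U r)) :
    Integrable (potentialWeight n G U) (Measure.pi fun _ : V => sphereUniform n) :=
  (integrable_const (expNeg (U 1) ^ G.edgeFinset.card)).mono'
    (measurable_potentialWeight G hUmeas).aestronglyMeasurable
    (ae_of_all _ fun σ => by
      rw [Real.norm_eq_abs, abs_of_nonneg (potentialWeight_nonneg G σ)]
      exact potentialWeight_le G hU σ)

end Weight

section FlipConfig

variable {n : ℕ} {V : Type} [Fintype V]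

noncomputable def flipConfig (i : Fin n) (ε : V → Bool) (σ : V → Spin n) : V → Spin n :=
  fun v => flipSpin i (ε v) (σ v)

theorem measurePreserving_flipConfig (i : Fin n) (ε : V → Bool) :
    MeasurePreserving (flipConfig i ε) (Measure.pi fun _ : V => sphereUniform n)
      (Measure.pi fun _ : V => sphereUniform n) :=
  measurePreserving_pi _ _ fun v => measurePreserving_flipSpin i (ε v)

variable [DecidableEq V]

theorem sum_flipConfig_flipConfig (g : (V → Spin n) → ℝ) (i : Fin n) (s : V → Bool)
    (σ : V → Spin n) :
    ∑ ε, g (flipConfig i ε (flipConfig i s σ)) = ∑ ε, g (flipConfig i ε σ) := by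
  have hxor : Function.Involutive fun ε : V → Bool => fun v => xor (ε v) (s v) :=
    fun ε => funext fun v => by simp
  refine Fintype.sum_equiv hxor.toPerm _ _ fun ε => congrArg g (funext fun v => ?_)
  exact flipSpin_flipSpin i (ε v) (s v) (σ v)

variable (G : SimpleGraph V) [DecidableRel G.Adj] {U : ℝ → WithTop ℝ}

theorem sum_flipConfig_correlation_nonneg_of_nonneg (hU : AntitoneOn U (Set.Icc (-1) 1))
    (i : Fin n) {ρ : V → Spin n} (hρ : ∀ v, 0 ≤ (ρ v).1 i) (x y : V) :
    0 ≤ ∑ ε, (flipConfig i ε ρ x).1 i * (flipConfig i ε ρ y).1 i *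
      potentialWeight n G U (flipConfig i ε ρ) := by
  have hw : ∀ e ∈ G.edgeFinset, ∃ f : ℝ → ℝ, 0 ≤ f (-1) ∧ f (-1) ≤ f 1 ∧
      ∀ ε, edgeWeight U (flipConfig i ε ρ) e = f (edgeSign ε e) := by
    intro e _
    induction e using Sym2.ind with
    | _ u v =>
      have hc : 0 ≤ (ρ u).1 i * (ρ v).1 i := mul_nonneg (hρ u) (hρ v)
      have hlow := abs_le.mp (abs_sdot_le_one (flipSpin i true (ρ u)) (flipSpin i false (ρ v)))
      have hup := abs_le.mp (abs_sdot_le_one (ρ u) (ρ v))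
      rw [sdot_flipSpin, boolSign_true, boolSign_false] at hlow
      refine ⟨fun t => expNeg (U (t * ((ρ u).1 i * (ρ v).1 i) +
        (sdot (ρ u) (ρ v) - (ρ u).1 i * (ρ v).1 i))), expNeg_nonneg _,
        expNeg_antitone (hU ⟨by linarith, by linarith⟩ ⟨by linarith, by linarith⟩ (by linarith)),
        fun ε => by simp only [edgeWeight, edgeSign, flipConfig, Sym2.lift_mk, sdot_flipSpin]⟩
  have hterm : ∀ ε, (flipConfig i ε ρ x).1 i * (flipConfig i ε ρ y).1 i *
      potentialWeight n G U (flipConfig i ε ρ) = (ρ x).1 i * (ρ y).1 i *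
        (boolSign (ε x) * boolSign (ε y) *
          ∏ e ∈ G.edgeFinset, edgeWeight U (flipConfig i ε ρ) e) := fun ε => by
    simp only [flipConfig, flipSpin_apply_self, potentialWeight_eq_prod_edgeWeight]
    ring
  simp only [hterm, ← Finset.mul_sum]
  exact mul_nonneg (mul_nonneg (hρ x) (hρ y))
    (sum_boolSign_mul_boolSign_mul_prod_nonneg G.edgeFinset _ hw x y)

theorem sum_flipConfig_correlation_nonneg (hU : AntitoneOn U (Set.Icc (-1) 1))
    (i : Fin n) (σ : V → Spin n) (x y : V) :
    0 ≤ ∑ ε, (flipConfig i ε σ x).1 i * (flipConfig i ε σ y).1 i *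
      potentialWeight n G U (flipConfig i ε σ) := by
  let s : V → Bool := fun v => decide ((σ v).1 i < 0)
  rw [← sum_flipConfig_flipConfig
    (fun τ => (τ x).1 i * (τ y).1 i * potentialWeight n G U τ) i s σ]
  refine sum_flipConfig_correlation_nonneg_of_nonneg G hU i (fun v => ?_) x y
  simp only [flipConfig, flipSpin_apply_self, s, boolSign_decide_neg_mul_self]
  exact abs_nonneg _

end FlipConfig

theorem spin_O_n_correlation_nonneg_general
    (n : ℕ)
    {V : Type} [Fintype V] [DecidableEq V]
    (G : SimpleGraph V) [DecidableRel G.Adj]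
    (U : ℝ → WithTop ℝ)
    (hUmono : ∀ r₁ r₂ : ℝ, -1 ≤ r₁ → r₁ ≤ r₂ → r₂ ≤ 1 → U r₂ ≤ U r₁)
    (hUmeas : Measurable fun r : ℝ => expNeg (U r))
    (x y : V) :
    0 ≤ (∫ σ : V → Metric.sphere (0 : EuclideanSpace ℝ (Fin n)) 1,
            sdot (σ x) (σ y) * potentialWeight n G U σ
          ∂(Measure.pi fun _ : V => sphereUniform n)) /
        (∫ σ : V → Metric.sphere (0 : EuclideanSpace ℝ (Fin n)) 1,
            potentialWeight n G U σ
          ∂(Measure.pi fun _ : V => sphereUniform n)) := by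
  have hU : AntitoneOn U (Set.Icc (-1) 1) := fun a ha b hb hab => hUmono a b ha.1 hab hb.2
  have hW := integrable_potentialWeight (n := n) G hU hUmeas
  have hcoord : ∀ i, Integrable (fun σ : V → Spin n => (σ x).1 i * (σ y).1 i *
      potentialWeight n G U σ) (Measure.pi fun _ : V => sphereUniform n) := fun i =>
    hW.bdd_mul (c := 1) (by fun_prop) (ae_of_all _ fun σ => by
      rw [Real.norm_eq_abs, abs_mul]
      exact mul_le_one₀ (abs_apply_le_one _ i) (abs_nonneg _) (abs_apply_le_one _ i))
  refine div_nonneg ?_ (integral_nonneg (potentialWeight_nonneg G))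
  simp only [sdot_eq_sum, Finset.sum_mul]
  rw [integral_finsetSum _ fun i _ => hcoord i]
  exact Finset.sum_nonneg fun i _ => integral_nonneg_of_sum_comp_nonneg
    (measurePreserving_flipConfig i) (sum_flipConfig_correlation_nonneg G hU i · x y)

/-- Non-negativity of correlations for the spin O(n) model (`n ≥ 2`) with a
non-increasing potential `U : [-1,1] → ℝ ∪ {∞}`: for `σ` sampled from the spin O(n) model on a
finite graph `G` with potential `U` (`U(1) < ∞` and `U(r₀) < ∞` for some `r₀ < 1`, so the
normalizing constant is finite and positive), `E(⟨σ_x, σ_y⟩) ≥ 0` for all vertices `x, y`. -/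
theorem spin_O_n_correlation_nonneg
    (n : ℕ) (hn : 2 ≤ n)
    {V : Type} [Fintype V] [DecidableEq V]
    (G : SimpleGraph V) [DecidableRel G.Adj]
    (U : ℝ → WithTop ℝ)
    (hUmono : ∀ r₁ r₂ : ℝ, -1 ≤ r₁ → r₁ ≤ r₂ → r₂ ≤ 1 → U r₂ ≤ U r₁)
    (hU1 : U 1 ≠ ⊤)
    (hU0 : ∃ r₀ : ℝ, -1 ≤ r₀ ∧ r₀ < 1 ∧ U r₀ ≠ ⊤)
    (hUmeas : Measurable fun r : ℝ => expNeg (U r))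
    (x y : V) :
    0 ≤ (∫ σ : V → Metric.sphere (0 : EuclideanSpace ℝ (Fin n)) 1,
            sdot (σ x) (σ y) * potentialWeight n G U σ
          ∂(Measure.pi fun _ : V => sphereUniform n)) /
        (∫ σ : V → Metric.sphere (0 : EuclideanSpace ℝ (Fin n)) 1,
            potentialWeight n G U σ
          ∂(Measure.pi fun _ : V => sphereUniform n)) :=
  spin_O_n_correlation_nonneg_general n G U hUmono hUmeas x y
end

section
/- For every integer Δ ≥ 1 there exists a constant a(Δ) > 0, depending only on Δ, such that for every simple graph 𝒢 with maximum degree at most Δ, every vertex v of 𝒢, and every integer k ≥ 1, the number of subsets W ⊆ V(𝒢) with |W| = k, v ∈ W, and W inducing a connected subgraph of 𝒢, is at most a(Δ)^k. -/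
/-!
A connected vertex set `W ∋ v` is the vertex set of a closed walk at `v` of length
`2 (|W| - 1)`: remove a vertex `w` whose removal keeps `W` connected (a leaf of a spanning
tree), take such a walk for `W \ {w}` recursively, and splice in a detour to `w` and back from a
neighbour of `w`. Hence `W` is determined by a closed walk at `v` of length `2 (k - 1)`, and in a
graph of maximum degree `Δ` there are at most `Δ ^ (2 (k - 1))` of those.
-/

open Finset

namespace SimpleGraph

variable {V : Type*} {G : SimpleGraph V}

theorem card_finsetWalkLength_le [DecidableEq V] [G.LocallyFinite] {Δ : ℕ}
    (hΔ : ∀ v, G.degree v ≤ Δ) (n : ℕ) (u w : V) : #(G.finsetWalkLength n u w) ≤ Δ ^ n := by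
  induction n generalizing u with
  | zero =>
    unfold finsetWalkLength
    split_ifs with h
    · subst h; simp
    · simp
  | succ n ih =>
    calc #(G.finsetWalkLength (n + 1) u w)
        ≤ ∑ x : G.neighborSet u, #(G.finsetWalkLength n x w) := by
          rw [finsetWalkLength]
          exact card_biUnion_le.trans (sum_le_sum fun x _ => (card_map _).le)
      _ ≤ ∑ _x : G.neighborSet u, Δ ^ n := sum_le_sum fun x _ => ih x
      _ = G.degree u * Δ ^ n := by
          rw [sum_const, card_univ, card_neighborSet_eq_degree, smul_eq_mul]
      _ ≤ Δ ^ (n + 1) := by rw [pow_succ']; exact Nat.mul_le_mul_right _ (hΔ u)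

theorem Walk.exists_eq_map_val_of_induce {s : Set V} {a b : s} (p : (G.induce s).Walk a b) :
    ∃ q : G.Walk a b, q.support = p.support.map Subtype.val ∧ q.length = p.length :=
  ⟨p.map (Embedding.induce s).toHom, Walk.support_map _ _, Walk.length_map _ _⟩

theorem Connected.exists_walk_forall_mem_support_length_eq [Finite V] (hG : G.Connected)
    (v : V) : ∃ p : G.Walk v v, (∀ w, w ∈ p.support) ∧ p.length = 2 * (Nat.card V - 1) := by
  classical
  induction h : Nat.card V generalizing V with
  | zero => exact absurd h (Nat.card_pos_iff.2 ⟨⟨v⟩, ‹_›⟩).ne'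
  | succ n ih =>
    rcases subsingleton_or_nontrivial V with hV | hV
    · have : n = 0 := by rw [Nat.card_eq_one_iff_unique.2 ⟨hV, ⟨v⟩⟩] at h; omega
      exact ⟨.nil, fun w => by simp [Subsingleton.elim w v], by simp [this]⟩
    obtain ⟨w, hw⟩ := hG.exists_connected_induce_compl_singleton_of_finite_nontrivial
    obtain ⟨u, huw⟩ := hG.preconnected.exists_adj_of_nontrivial w
    have hcard : Nat.card ({w}ᶜ : Set V) = n := by
      rw [Nat.card_coe_set_eq, Set.ncard_compl, Set.ncard_singleton, h, Nat.add_sub_cancel]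
    obtain ⟨q, hq_supp, hq_len⟩ := ih hw ⟨u, huw.ne.symm⟩ hcard
    obtain ⟨c, hc_supp, hc_len⟩ :
        ∃ c : G.Walk u u, (∀ x, x ∈ c.support) ∧ c.length = q.length + 2 := by
      obtain ⟨q', hq'_supp, hq'_len⟩ := q.exists_eq_map_val_of_induce
      refine ⟨q'.append (.cons huw.symm (.cons huw .nil)), fun x => ?_, by simp [hq'_len]⟩
      simp only [Walk.mem_support_append_iff, hq'_supp, List.mem_map]
      by_cases hx : x = w
      · simp [hx]
      · exact Or.inl ⟨⟨x, hx⟩, hq_supp _, rfl⟩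
    have : 1 < n + 1 := h ▸ Finite.one_lt_card
    exact ⟨c.rotate v (hc_supp v), fun x => (c.mem_support_rotate_iff _ _).2 (hc_supp x),
      by rw [Walk.length_rotate, hc_len, hq_len]; omega⟩

theorem exists_walk_support_toFinset_eq_of_connected_induce [DecidableEq V] {W : Finset V}
    (hW : (G.induce (W : Set V)).Connected) {v : V} (hv : v ∈ W) :
    ∃ p : G.Walk v v, p.support.toFinset = W ∧ p.length = 2 * (#W - 1) := by
  obtain ⟨p, hp_supp, hp_len⟩ := hW.exists_walk_forall_mem_support_length_eq ⟨v, hv⟩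
  obtain ⟨q, hq_supp, hq_len⟩ := p.exists_eq_map_val_of_induce
  refine ⟨q, ?_, ?_⟩
  · ext x
    simp only [hq_supp, List.mem_toFinset, List.mem_map]
    exact ⟨fun ⟨y, _, hy⟩ => hy ▸ y.2, fun hx => ⟨⟨x, hx⟩, hp_supp _, rfl⟩⟩
  · rw [hq_len, hp_len, Nat.card_coe_set_eq, Set.ncard_coe_finset]

end SimpleGraph

open SimpleGraph

/-- **Counting connected subgraphs.**  For every `Δ ≥ 1` there is a constant `a(Δ) > 0` such
that for every simple graph `𝒢` of maximum degree at most `Δ` (every vertex has at most `Δ`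
neighbours), every vertex `v` and every `k ≥ 1`, the family of vertex subsets `W` of size `k`
which contain `v` and induce a connected subgraph of `𝒢` is finite, of cardinality at most
`a(Δ)^k`. -/
theorem count_connected_subsets (Δ : ℕ) (hΔ : 1 ≤ Δ) :
    ∃ a : ℕ, 0 < a ∧
      ∀ (V : Type) (G : SimpleGraph V),
        (∀ v : V, {u : V | G.Adj v u}.Finite ∧ {u : V | G.Adj v u}.ncard ≤ Δ) →
        ∀ (v : V) (k : ℕ), 1 ≤ k →
          {W : Finset V | W.card = k ∧ v ∈ W ∧ (G.induce (W : Set V)).Connected}.Finite ∧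
          {W : Finset V | W.card = k ∧ v ∈ W ∧ (G.induce (W : Set V)).Connected}.ncard ≤ a ^ k := by
  refine ⟨Δ ^ 2, pow_pos hΔ 2, fun V G hG v k _ => ?_⟩
  classical
  let _ : G.LocallyFinite := fun x => (hG x).1.fintype
  have hdeg : ∀ x, G.degree x ≤ Δ := fun x => by
    rw [← card_neighborSet_eq_degree, ← Nat.card_eq_fintype_card, Nat.card_coe_set_eq]
    exact (hG x).2
  set tours := G.finsetWalkLength (2 * (k - 1)) v v
  have hsub : {W : Finset V | W.card = k ∧ v ∈ W ∧ (G.induce (W : Set V)).Connected} ⊆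
      (tours.image fun p => p.support.toFinset : Set (Finset V)) := by
    rintro W ⟨rfl, hv, hW⟩
    obtain ⟨p, hp_supp, hp_len⟩ := exists_walk_support_toFinset_eq_of_connected_induce hW hv
    exact mem_coe.2 (mem_image.2 ⟨p, mem_finsetWalkLength_iff.2 hp_len, hp_supp⟩)
  refine ⟨(finite_toSet _).subset hsub, ?_⟩
  calc _ ≤ #(tours.image fun p => p.support.toFinset) :=
        (Set.ncard_le_ncard hsub (finite_toSet _)).trans (Set.ncard_coe_finset _).le
    _ ≤ #tours := card_image_le
    _ ≤ Δ ^ (2 * (k - 1)) := card_finsetWalkLength_le hdeg _ _ _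
    _ ≤ Δ ^ (2 * k) := Nat.pow_le_pow_right hΔ (by omega)
    _ = (Δ ^ 2) ^ k := pow_mul _ _ _
end

section
/- Let H be a finite simple graph of maximum degree at most 3 (for example, a domain in the hexagonal lattice), let n, x > 0, and let ω be sampled from the loop O(n) measure on H with edge weight x. Then for every even subgraph A ⊆ E(H): Pr(A ⊆ ω) ≤ n^{L(A)} · x^{o(A)}. -/
open scoped BigOperators Classical

/-- A set of edges `ω` of a graph `H` is an *even subgraph* (loop configuration) if every
vertex of `H` is incident to an even number of edges of `ω`. -/
def IsEvenSubgraph {V : Type} [Fintype V] [DecidableEq V]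
    (H : SimpleGraph V) [DecidableRel H.Adj] (ω : Finset (Sym2 V)) : Prop :=
  ω ⊆ H.edgeFinset ∧ ∀ v : V, Even ((ω.filter (fun e => v ∈ e)).card)

/-- The number of loops of an even subgraph `ω`: the number of connected components of the
graph with edge set `ω` which contain at least one edge of `ω`. -/
noncomputable def numLoops {V : Type} [Fintype V] [DecidableEq V]
    (ω : Finset (Sym2 V)) : ℕ :=
  ((SimpleGraph.fromEdgeSet (↑ω : Set (Sym2 V))).connectedComponentMk ''
    {v : V | ∃ e ∈ ω, v ∈ e}).ncard

/-- The weight `x^{o(ω)} n^{L(ω)}` of a loop configuration `ω` in the loop O(n) model with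
edge weight `x` (`o(ω)` = number of edges, `L(ω)` = number of loops). -/
noncomputable def loopWeight {V : Type} [Fintype V] [DecidableEq V]
    (n x : ℝ) (ω : Finset (Sym2 V)) : ℝ :=
  x ^ ω.card * n ^ numLoops ω

open SimpleGraph in
/-- If the supports of `A` and `B` are disjoint, then any walk in the graph with edge set
`A ∪ B` starting at a vertex in the support of `A` stays in the support of `A`, and the
endpoints are reachable using only edges of `A`. -/
private lemma reach_in_left {V : Type} [Fintype V] [DecidableEq V]
    {A B : Finset (Sym2 V)}
    (hdisj : ∀ v : V, (∃ e ∈ A, v ∈ e) → (∃ e ∈ B, v ∈ e) → False)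
    {u v : V}
    (p : (fromEdgeSet ((↑(A ∪ B)) : Set (Sym2 V))).Walk u v) :
    (∃ e ∈ A, u ∈ e) →
      (fromEdgeSet ((↑A) : Set (Sym2 V))).Reachable u v ∧ ∃ e ∈ A, v ∈ e := by
  induction p with
  | nil => exact fun hu => ⟨Reachable.refl _, hu⟩
  | @cons a b c h p ih =>
    intro hu
    rw [fromEdgeSet_adj] at h
    have hmem : s(a, b) ∈ A := by
      have h1 := h.1
      rw [Finset.coe_union] at h1
      rcases h1 with hA | hB
      · exact_mod_cast hA
      · exact (hdisj a hu ⟨s(a, b), by exact_mod_cast hB, Sym2.mem_mk_left a b⟩).elim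
    have hb : ∃ e ∈ A, b ∈ e := ⟨s(a, b), hmem, Sym2.mem_mk_right a b⟩
    obtain ⟨hr, hv⟩ := ih hb
    have hadj : (fromEdgeSet ((↑A) : Set (Sym2 V))).Adj a b :=
      (fromEdgeSet_adj _).mpr ⟨by exact_mod_cast hmem, h.2⟩
    exact ⟨hadj.reachable.trans hr, hv⟩

open SimpleGraph in
private lemma ncard_image_left {V : Type} [Fintype V] [DecidableEq V]
    {A B : Finset (Sym2 V)}
    (hdisj : ∀ v : V, (∃ e ∈ A, v ∈ e) → (∃ e ∈ B, v ∈ e) → False) :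
    ((fromEdgeSet ((↑(A ∪ B)) : Set (Sym2 V))).connectedComponentMk ''
        {v : V | ∃ e ∈ A, v ∈ e}).ncard = numLoops A := by
  classical
  set G : SimpleGraph V := fromEdgeSet ((↑A) : Set (Sym2 V)) with hG
  set G' : SimpleGraph V := fromEdgeSet ((↑(A ∪ B)) : Set (Sym2 V)) with hG'
  have hle : G ≤ G' := by
    apply fromEdgeSet_mono
    rw [Finset.coe_union]
    exact Set.subset_union_left
  set φ : G.ConnectedComponent → G'.ConnectedComponent :=
    ConnectedComponent.map (Hom.ofLE hle) with hφ
  have hcomm : ∀ v : V, φ (G.connectedComponentMk v) = G'.connectedComponentMk v :=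
    fun v => rfl
  have himg : G'.connectedComponentMk '' {v : V | ∃ e ∈ A, v ∈ e}
      = φ '' (G.connectedComponentMk '' {v : V | ∃ e ∈ A, v ∈ e}) := by
    rw [Set.image_image]
    exact Set.image_congr fun v _ => (hcomm v).symm
  rw [himg, numLoops]
  apply Set.ncard_image_of_injOn
  rintro c1 ⟨u, hu, rfl⟩ c2 ⟨v, hv, rfl⟩ hcc
  rw [hcomm, hcomm] at hcc
  have hreach : G'.Reachable u v := (ConnectedComponent.eq).mp hcc
  obtain ⟨p⟩ := hreach
  have := (reach_in_left hdisj p hu).1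
  exact (ConnectedComponent.eq).mpr this

open SimpleGraph in
private lemma numLoops_union {V : Type} [Fintype V] [DecidableEq V]
    {A B : Finset (Sym2 V)}
    (hdisj : ∀ v : V, (∃ e ∈ A, v ∈ e) → (∃ e ∈ B, v ∈ e) → False) :
    numLoops (A ∪ B) = numLoops A + numLoops B := by
  classical
  set G' : SimpleGraph V := fromEdgeSet ((↑(A ∪ B)) : Set (Sym2 V)) with hG'
  have hsupp : {v : V | ∃ e ∈ (A ∪ B), v ∈ e}
      = {v : V | ∃ e ∈ A, v ∈ e} ∪ {v : V | ∃ e ∈ B, v ∈ e} := by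
    ext v
    simp only [Set.mem_setOf_eq, Set.mem_union, Finset.mem_union]
    constructor
    · rintro ⟨e, (h | h), he⟩
      · exact Or.inl ⟨e, h, he⟩
      · exact Or.inr ⟨e, h, he⟩
    · rintro (⟨e, h, he⟩ | ⟨e, h, he⟩)
      · exact ⟨e, Or.inl h, he⟩
      · exact ⟨e, Or.inr h, he⟩
  have hdisj' : ∀ v : V, (∃ e ∈ B, v ∈ e) → (∃ e ∈ A, v ∈ e) → False :=
    fun v hB hA => hdisj v hA hB
  have hBA : numLoops (A ∪ B) = ((fromEdgeSet ((↑(B ∪ A)) : Set (Sym2 V))).connectedComponentMk ''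
      {v : V | ∃ e ∈ (A ∪ B), v ∈ e}).ncard := by
    rw [numLoops, Finset.union_comm A B]
  rw [numLoops, hsupp, Set.image_union]
  have hdisjimg : Disjoint (G'.connectedComponentMk '' {v : V | ∃ e ∈ A, v ∈ e})
      (G'.connectedComponentMk '' {v : V | ∃ e ∈ B, v ∈ e}) := by
    rw [Set.disjoint_left]
    rintro c ⟨u, hu, rfl⟩ ⟨v, hv, hvc⟩
    have hreach : G'.Reachable u v := (ConnectedComponent.eq).mp hvc.symm
    obtain ⟨p⟩ := hreach
    exact hdisj v (reach_in_left hdisj p hu).2 hv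
  rw [Set.ncard_union_eq hdisjimg (Set.toFinite _) (Set.toFinite _)]
  congr 1
  · exact ncard_image_left hdisj
  · have : G' = fromEdgeSet ((↑(B ∪ A)) : Set (Sym2 V)) := by
      rw [hG', Finset.union_comm]
    rw [this]
    exact ncard_image_left hdisj'

private lemma numLoops_empty {V : Type} [Fintype V] [DecidableEq V] :
    numLoops (∅ : Finset (Sym2 V)) = 0 := by
  have : {v : V | ∃ e ∈ (∅ : Finset (Sym2 V)), v ∈ e} = ∅ := by
    ext v; simp
  rw [numLoops, this, Set.image_empty, Set.ncard_empty]

/-- **An upper bound on the probability that a given collection of loops appears in the loop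
O(n) model.**  Let `H` be a finite simple graph of maximum degree at most 3 (e.g. a domain in
the hexagonal lattice), let `n, x > 0` and let `ω` be sampled from the loop O(n) measure on
`H` with edge weight `x`.  Then for every even subgraph `A` of `H`:
`Pr(A ⊆ ω) ≤ n^{L(A)} · x^{o(A)}`. -/
theorem loop_O_n_given_loops_unlikely
    {V : Type} [Fintype V] [DecidableEq V]
    (H : SimpleGraph V) [DecidableRel H.Adj]
    (hdeg : ∀ v : V, H.degree v ≤ 3)
    (n x : ℝ) (hn : 0 < n) (hx : 0 < x)
    (A : Finset (Sym2 V)) (hA : IsEvenSubgraph H A) :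
    (∑ ω ∈ Finset.univ.filter (fun ω : Finset (Sym2 V) => IsEvenSubgraph H ω ∧ A ⊆ ω),
        loopWeight n x ω) /
      (∑ ω ∈ Finset.univ.filter (fun ω : Finset (Sym2 V) => IsEvenSubgraph H ω),
        loopWeight n x ω)
    ≤ n ^ numLoops A * x ^ A.card := by
  classical
  set c : ℝ := n ^ numLoops A * x ^ A.card with hc
  set S : Finset (Finset (Sym2 V)) :=
    Finset.univ.filter (fun ω : Finset (Sym2 V) => IsEvenSubgraph H ω ∧ A ⊆ ω) with hS
  set T : Finset (Finset (Sym2 V)) :=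
    Finset.univ.filter (fun ω : Finset (Sym2 V) => IsEvenSubgraph H ω) with hT
  -- weights are nonnegative
  have hw_nonneg : ∀ ω : Finset (Sym2 V), 0 ≤ loopWeight n x ω := fun ω =>
    mul_nonneg (pow_nonneg hx.le _) (pow_nonneg hn.le _)
  -- degree bound: every vertex has at most 2 incident edges in an even subgraph
  have hdeg2 : ∀ (ω : Finset (Sym2 V)), IsEvenSubgraph H ω →
      ∀ v : V, (ω.filter (fun e => v ∈ e)).card ≤ 2 := by
    intro ω hω v
    have hsub : ω.filter (fun e => v ∈ e) ⊆ H.edgeFinset.filter (fun e => v ∈ e) :=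
      Finset.filter_subset_filter _ hω.1
    have h3 : (ω.filter (fun e => v ∈ e)).card ≤ 3 := by
      calc (ω.filter (fun e => v ∈ e)).card
          ≤ (H.edgeFinset.filter (fun e => v ∈ e)).card := Finset.card_le_card hsub
        _ = H.degree v := by
            rw [← SimpleGraph.incidenceFinset_eq_filter,
              SimpleGraph.card_incidenceFinset_eq_degree]
        _ ≤ 3 := hdeg v
    obtain ⟨k, hk⟩ := hω.2 v
    omega
  -- for ω in S, supports of A and ω \ A are disjoint, and ω \ A is even
  have hkey : ∀ ω : Finset (Sym2 V), IsEvenSubgraph H ω → A ⊆ ω →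
      IsEvenSubgraph H (ω \ A) ∧ loopWeight n x ω = c * loopWeight n x (ω \ A) := by
    intro ω hω hAω
    have hunion : A ∪ (ω \ A) = ω := Finset.union_sdiff_of_subset hAω
    have hdisjAB : Disjoint A (ω \ A) := Finset.disjoint_sdiff
    have hfiltercard : ∀ v : V, (ω.filter (fun e => v ∈ e)).card
        = (A.filter (fun e => v ∈ e)).card + ((ω \ A).filter (fun e => v ∈ e)).card := by
      intro v
      conv_lhs => rw [← hunion]
      rw [Finset.filter_union,
        Finset.card_union_of_disjoint (Finset.disjoint_filter_filter hdisjAB)]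
    have heven : IsEvenSubgraph H (ω \ A) := by
      refine ⟨fun e he => hω.1 (Finset.sdiff_subset he), fun v => ?_⟩
      obtain ⟨k, hk⟩ := hω.2 v
      obtain ⟨m, hm⟩ := hA.2 v
      have := hfiltercard v
      exact ⟨k - m, by omega⟩
    have hsuppdisj : ∀ v : V, (∃ e ∈ A, v ∈ e) → (∃ e ∈ (ω \ A), v ∈ e) → False := by
      intro v ⟨e1, he1, hv1⟩ ⟨e2, he2, hv2⟩
      have h1 : 1 ≤ (A.filter (fun e => v ∈ e)).card :=
        Finset.card_pos.mpr ⟨e1, Finset.mem_filter.mpr ⟨he1, hv1⟩⟩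
      have h2 : 1 ≤ ((ω \ A).filter (fun e => v ∈ e)).card :=
        Finset.card_pos.mpr ⟨e2, Finset.mem_filter.mpr ⟨he2, hv2⟩⟩
      obtain ⟨m, hm⟩ := hA.2 v
      have hle2 := hdeg2 ω hω v
      have := hfiltercard v
      omega
    have hL : numLoops ω = numLoops A + numLoops (ω \ A) := by
      conv_lhs => rw [← hunion]
      exact numLoops_union hsuppdisj
    have hcard : ω.card = A.card + (ω \ A).card := by
      conv_lhs => rw [← hunion]
      rw [Finset.card_union_of_disjoint hdisjAB]
    refine ⟨heven, ?_⟩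
    rw [loopWeight, loopWeight, hL, hcard, pow_add, pow_add, hc]
    ring
  -- numerator rewritten
  have hnum : (∑ ω ∈ S, loopWeight n x ω) = c * ∑ ω ∈ S, loopWeight n x (ω \ A) := by
    rw [Finset.mul_sum]
    apply Finset.sum_congr rfl
    intro ω hω
    rw [hS, Finset.mem_filter] at hω
    exact (hkey ω hω.2.1 hω.2.2).2
  have hinj : ∀ ω₁ ∈ S, ∀ ω₂ ∈ S, ω₁ \ A = ω₂ \ A → ω₁ = ω₂ := by
    intro ω₁ h₁ ω₂ h₂ h
    rw [hS, Finset.mem_filter] at h₁ h₂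
    rw [← Finset.union_sdiff_of_subset h₁.2.2, ← Finset.union_sdiff_of_subset h₂.2.2, h]
  have himage : (∑ ω ∈ S, loopWeight n x (ω \ A))
      = ∑ η ∈ S.image (fun ω => ω \ A), loopWeight n x η := (Finset.sum_image hinj).symm
  have hsubT : S.image (fun ω => ω \ A) ⊆ T := by
    intro η hη
    obtain ⟨ω, hω, rfl⟩ := Finset.mem_image.mp hη
    rw [hS, Finset.mem_filter] at hω
    rw [hT, Finset.mem_filter]
    exact ⟨Finset.mem_univ _, (hkey ω hω.2.1 hω.2.2).1⟩
  have hle : (∑ ω ∈ S, loopWeight n x ω) ≤ c * ∑ ω ∈ T, loopWeight n x ω := by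
    rw [hnum, himage]
    have hc_nonneg : 0 ≤ c := mul_nonneg (pow_nonneg hn.le _) (pow_nonneg hx.le _)
    apply mul_le_mul_of_nonneg_left _ hc_nonneg
    exact Finset.sum_le_sum_of_subset_of_nonneg hsubT (fun i _ _ => hw_nonneg i)
  -- denominator is positive
  have hTpos : 0 < ∑ ω ∈ T, loopWeight n x ω := by
    have hem : (∅ : Finset (Sym2 V)) ∈ T := by
      rw [hT, Finset.mem_filter]
      exact ⟨Finset.mem_univ _, fun e he => absurd he (Finset.notMem_empty e),
        fun v => by simp⟩
    have hwempty : loopWeight n x (∅ : Finset (Sym2 V)) = 1 := by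
      rw [loopWeight, numLoops_empty]; simp
    calc (0 : ℝ) < 1 := one_pos
      _ = loopWeight n x (∅ : Finset (Sym2 V)) := hwempty.symm
      _ ≤ ∑ ω ∈ T, loopWeight n x ω :=
          Finset.single_le_sum (fun i _ => hw_nonneg i) hem
  rw [div_le_iff₀ hTpos]
  exact hle
end
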